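/- Let K₀ ≥ 1 and N ≥ 1 be integers and let s = σ + iτ ∈ ℂ with σ > −2K₀ + 1. Then |C(s+2K₀−1, 2K₀) ∫_N^∞ B_{2K₀}({t}) t^{−s−2K₀} dt| ≤ (ζ(2K₀)/(π N^σ)) · (|s+2K₀−1|/(σ+2K₀−1)) · ∏_{j=0}^{2K₀−2} |s+j|/(2πN), where C(s+2K₀−1, 2K₀) = (∏_{j=0}^{2K₀−1}(s+j))/(2K₀)! denotes the generalized binomial coefficient. -/

import Mathlib

open MeasureTheory Polynomial

set_option maxHeartbeats 1000000

lemma zr_zeta_re {k : ℕ} (hk : 2 ≤ k) :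
    ((riemannZeta ((k:ℕ):ℂ)).re : ℝ) = ∑' n : ℕ, 1 / (n:ℝ) ^ k := by
  rw [zeta_nat_eq_tsum_of_gt_one (by omega)]
  rw [show (fun n : ℕ => 1 / (n:ℂ)^k) = fun n : ℕ => ((1 / (n:ℝ)^k : ℝ) : ℂ) by
    ext n; push_cast; ring]
  rw [← Complex.ofReal_tsum, Complex.ofReal_re]

lemma zr_hasSum {k : ℕ} (hk : 2 ≤ k) :
    HasSum (fun n : ℕ => 1 / (n:ℝ) ^ k) (riemannZeta ((k:ℕ):ℂ)).re := by
  have h : Summable (fun n : ℕ => 1 / (n:ℝ) ^ k) :=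
    Real.summable_one_div_nat_pow.mpr (by omega)
  simpa [zr_zeta_re hk] using h.hasSum

lemma zr_zeta_pos {k : ℕ} (hk : 2 ≤ k) : 0 < (riemannZeta ((k:ℕ):ℂ)).re := by
  have := (zr_hasSum hk)
  refine lt_of_lt_of_le ?_ (le_hasSum this 1 (fun i _ => by positivity))
  norm_num

lemma zr_bern_bound {k : ℕ} (hk : 2 ≤ k) {x : ℝ} (hx : x ∈ Set.Icc (0:ℝ) 1) :
    |bernoulliFun k x| ≤
      2 * (riemannZeta ((k:ℕ):ℂ)).re * (Nat.factorial k) / (2 * Real.pi) ^ k := by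
  have H := hasSum_one_div_pow_mul_fourier_mul_bernoulliFun hk hx
  set Z := (riemannZeta ((k:ℕ):ℂ)).re with hZ
  -- HasSum of norms
  have hg : HasSum (fun n : ℤ => ‖1 / (n : ℂ) ^ k * fourier n (x : UnitAddCircle)‖) (Z + Z) := by
    have hf1 : HasSum (fun n : ℕ => ‖1 / ((n:ℤ) : ℂ) ^ k * fourier (n:ℤ) (x : UnitAddCircle)‖)
        Z := by
      refine (zr_hasSum hk).congr_fun fun n => ?_
      have h1 : ‖fourier (n:ℤ) (x : UnitAddCircle)‖ = 1 := Circle.norm_coe _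
      have h2 : (((n:ℤ)):ℂ) = ((n:ℕ):ℂ) := by push_cast; ring
      rw [norm_mul, h1, mul_one, h2, norm_div, norm_one, norm_pow, Complex.norm_natCast]
    have hf2 : HasSum (fun n : ℕ =>
        ‖1 / ((-(n+1) :ℤ) : ℂ) ^ k * fourier (-(n+1) :ℤ) (x : UnitAddCircle)‖) Z := by
      have h0 : HasSum (fun n : ℕ => 1 / ((n+1:ℕ):ℝ) ^ k) Z := by
        have := (hasSum_nat_add_iff' (f := fun n : ℕ => 1 / (n:ℝ) ^ k) 1).mpr (zr_hasSum hk)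
        simpa [zero_pow (by omega : k ≠ 0)] using this
      refine h0.congr_fun fun n => ?_
      have h1 : ‖fourier (-(n+1) :ℤ) (x : UnitAddCircle)‖ = 1 := Circle.norm_coe _
      have h2 : ((-(n+1):ℤ) : ℂ) = -((n+1:ℕ):ℂ) := by push_cast; ring
      rw [norm_mul, h1, mul_one, h2, norm_div, norm_one, norm_pow, norm_neg,
        Complex.norm_natCast]
    exact hf1.of_nat_of_neg_add_one hf2
  have hnorm : ‖-(2 * (Real.pi:ℂ) * Complex.I) ^ k / (Nat.factorial k) * bernoulliFun k x‖
      ≤ Z + Z := by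
    rw [← H.tsum_eq]
    exact (norm_tsum_le_tsum_norm hg.summable).trans_eq hg.tsum_eq
  have hpi : (0:ℝ) < Real.pi := Real.pi_pos
  have hval : ‖-(2 * (Real.pi:ℂ) * Complex.I) ^ k / (Nat.factorial k) * bernoulliFun k x‖
      = (2 * Real.pi) ^ k / (Nat.factorial k) * |bernoulliFun k x| := by
    rw [norm_mul, norm_div, norm_neg, norm_pow]
    have : ‖2 * (Real.pi:ℂ) * Complex.I‖ = 2 * Real.pi := by
      simp [abs_of_nonneg hpi.le]
    rw [this, Complex.norm_real, Complex.norm_natCast]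
    simp [Real.norm_eq_abs]
  rw [hval] at hnorm
  have hfac : (0:ℝ) < (Nat.factorial k : ℝ) := by positivity
  have h2pi : (0:ℝ) < (2 * Real.pi) ^ k := by positivity
  rw [div_mul_eq_mul_div, div_le_iff₀ hfac] at hnorm
  rw [le_div_iff₀ h2pi]
  nlinarith [abs_nonneg (bernoulliFun k x)]

/-- Bound for the Euler–Maclaurin remainder term of the zeta function: for
`K₀ ≥ 1`, `N ≥ 1`, and `s = σ + iτ` with `σ > −2K₀+1`,
`|C(s+2K₀−1,2K₀) ∫_N^∞ B_{2K₀}({t}) t^{−s−2K₀} dt|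
  ≤ (ζ(2K₀)/(π N^σ)) · (|s+2K₀−1|/(σ+2K₀−1)) · ∏_{j=0}^{2K₀−2} |s+j|/(2πN)`. -/
theorem zeta_remainder_bound (K₀ N : ℕ) (hK : 1 ≤ K₀) (hN : 1 ≤ N) (s : ℂ)
    (hs : -(2 * (K₀:ℝ)) + 1 < s.re) :
    ‖(((∏ j ∈ Finset.range (2*K₀), (s + (j:ℂ))) / (Nat.factorial (2*K₀)))
          * ∫ t in Set.Ioi (N:ℝ),
              ((Polynomial.aeval (Int.fract t) (Polynomial.bernoulli (2*K₀)) : ℝ) : ℂ)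
                * (t:ℂ) ^ (-s - (2*(K₀:ℂ))))‖
      ≤ ((riemannZeta ((2*K₀ : ℕ) : ℂ)).re / (Real.pi * (N:ℝ) ^ s.re))
          * (‖s + 2*(K₀:ℂ) - 1‖ / (s.re + 2*(K₀:ℝ) - 1))
          * ∏ j ∈ Finset.range (2*K₀ - 1), ‖s + (j:ℂ)‖ / (2 * Real.pi * N) := by
  have hM2 : 2 ≤ 2 * K₀ := by omega
  have hNpos : (0:ℝ) < N := by exact_mod_cast hN.trans_lt' Nat.zero_lt_one
  have hπ := Real.pi_pos
  set Z := (riemannZeta ((2*K₀ : ℕ) : ℂ)).re with hZdef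
  have hZ : 0 < Z := zr_zeta_pos hM2
  set B : ℝ := 2 * Z * (Nat.factorial (2*K₀)) / (2 * Real.pi) ^ (2*K₀) with hB
  have hD : (0:ℝ) < s.re + 2*(K₀:ℝ) - 1 := by linarith
  set r : ℝ := -s.re - 2*(K₀:ℝ) with hr
  have hr1 : r < -1 := by rw [hr]; linarith
  have hBpos : 0 < B := by
    rw [hB]; positivity
  -- pointwise bound
  have hptwise : ∀ t : ℝ, t ∈ Set.Ioi (N:ℝ) →
      ‖((Polynomial.aeval (Int.fract t) (Polynomial.bernoulli (2*K₀)) : ℝ) : ℂ)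
          * (t:ℂ) ^ (-s - (2*(K₀:ℂ)))‖ ≤ B * t ^ r := by
    intro t ht
    have htpos : (0:ℝ) < t := hNpos.trans ht
    have h1 : (Polynomial.aeval (Int.fract t) (Polynomial.bernoulli (2*K₀)) : ℝ)
        = bernoulliFun (2*K₀) (Int.fract t) := by
      rw [bernoulliFun, Polynomial.eval_map, Polynomial.aeval_def]
    have h2 : ‖(t:ℂ) ^ (-s - (2*(K₀:ℂ)))‖ = t ^ r := by
      rw [Complex.norm_cpow_eq_rpow_re_of_pos htpos]
      congr 1
      rw [hr]; simp
    rw [norm_mul, h2, Complex.norm_real, h1]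
    have h3 : |bernoulliFun (2*K₀) (Int.fract t)| ≤ B :=
      zr_bern_bound hM2 ⟨Int.fract_nonneg t, (Int.fract_lt_one t).le⟩
    exact mul_le_mul_of_nonneg_right h3 (Real.rpow_nonneg htpos.le r)
  -- integral bound
  have hint : ‖∫ t in Set.Ioi (N:ℝ),
        ((Polynomial.aeval (Int.fract t) (Polynomial.bernoulli (2*K₀)) : ℝ) : ℂ)
          * (t:ℂ) ^ (-s - (2*(K₀:ℂ)))‖ ≤ B * ((N:ℝ) ^ (r+1) / (s.re + 2*(K₀:ℝ) - 1)) := by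
    have hg : IntegrableOn (fun t : ℝ => B * t ^ r) (Set.Ioi (N:ℝ)) :=
      (integrableOn_Ioi_rpow_of_lt hr1 hNpos).const_mul B
    have hb : ∀ᵐ t ∂(volume.restrict (Set.Ioi (N:ℝ))),
        ‖((Polynomial.aeval (Int.fract t) (Polynomial.bernoulli (2*K₀)) : ℝ) : ℂ)
            * (t:ℂ) ^ (-s - (2*(K₀:ℂ)))‖ ≤ B * t ^ r :=
      (ae_restrict_iff' measurableSet_Ioi).mpr (Filter.Eventually.of_forall hptwise)
    calc ‖∫ t in Set.Ioi (N:ℝ),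
          ((Polynomial.aeval (Int.fract t) (Polynomial.bernoulli (2*K₀)) : ℝ) : ℂ)
            * (t:ℂ) ^ (-s - (2*(K₀:ℂ)))‖
        ≤ ∫ t in Set.Ioi (N:ℝ), B * t ^ r := norm_integral_le_of_norm_le hg hb
      _ = B * ∫ t in Set.Ioi (N:ℝ), t ^ r := by rw [integral_const_mul]
      _ = B * ((N:ℝ) ^ (r+1) / (s.re + 2*(K₀:ℝ) - 1)) := by
          rw [integral_Ioi_rpow_of_lt hr1 hNpos]
          congr 1
          rw [hr]
          rw [show -s.re - 2*(K₀:ℝ) + 1 = -(s.re + 2*(K₀:ℝ) - 1) by ring]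
          rw [neg_div, div_neg, neg_neg]
  -- assemble
  rw [norm_mul, norm_div, norm_prod, Complex.norm_natCast]
  have hmain : (∏ j ∈ Finset.range (2*K₀), ‖s + (j:ℂ)‖)
        / (Nat.factorial (2*K₀) : ℝ) * (B * ((N:ℝ) ^ (r+1) / (s.re + 2*(K₀:ℝ) - 1)))
      = (Z / (Real.pi * (N:ℝ) ^ s.re))
          * (‖s + 2*(K₀:ℂ) - 1‖ / (s.re + 2*(K₀:ℝ) - 1))
          * ∏ j ∈ Finset.range (2*K₀ - 1), ‖s + (j:ℂ)‖ / (2 * Real.pi * N) := by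
    obtain ⟨m, hm⟩ : ∃ m, 2*K₀ = m + 1 := ⟨2*K₀ - 1, by omega⟩
    have hmcast : ((m:ℕ):ℂ) = 2*(K₀:ℂ) - 1 := by
      have : ((m:ℕ):ℂ) + 1 = 2*(K₀:ℂ) := by
        rw [show ((m:ℕ):ℂ) + 1 = ((m+1:ℕ):ℂ) by push_cast; ring, ← hm]; push_cast; ring
      linear_combination this
    rw [hm, Finset.prod_range_succ, Nat.add_sub_cancel, hmcast,
      show s + (2*(K₀:ℂ) - 1) = s + 2*(K₀:ℂ) - 1 by ring]
    have hmr : 2*(K₀:ℝ) = (m:ℝ) + 1 := by exact_mod_cast congrArg (fun x : ℕ => (x:ℝ)) hm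
    rw [Finset.prod_div_distrib, Finset.prod_const, Finset.card_range]
    have hrpow : (N:ℝ) ^ (r+1) = ((N:ℝ) ^ s.re)⁻¹ * ((N:ℝ) ^ m)⁻¹ := by
      rw [show r + 1 = (-s.re) + (-(m:ℝ)) by rw [hr, hmr]; ring,
        Real.rpow_add hNpos, Real.rpow_neg hNpos.le, Real.rpow_neg hNpos.le,
        Real.rpow_natCast]
    rw [hrpow, hB, hm]
    have hNσ : (0:ℝ) < (N:ℝ) ^ s.re := Real.rpow_pos_of_pos hNpos _
    have hfac : (0:ℝ) < (Nat.factorial (m+1) : ℝ) := by positivity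
    rw [show ((2:ℝ) * Real.pi * N) ^ m = (2*Real.pi)^m * (N:ℝ)^m by rw [mul_pow],
      pow_succ]
    field_simp
  calc (∏ j ∈ Finset.range (2*K₀), ‖s + (j:ℂ)‖)
        / (Nat.factorial (2*K₀) : ℝ)
        * ‖∫ t in Set.Ioi (N:ℝ),
            ((Polynomial.aeval (Int.fract t) (Polynomial.bernoulli (2*K₀)) : ℝ) : ℂ)
              * (t:ℂ) ^ (-s - (2*(K₀:ℂ)))‖
      ≤ (∏ j ∈ Finset.range (2*K₀), ‖s + (j:ℂ)‖)
        / (Nat.factorial (2*K₀) : ℝ) * (B * ((N:ℝ) ^ (r+1) / (s.re + 2*(K₀:ℝ) - 1))) := by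
        refine mul_le_mul_of_nonneg_left hint ?_
        positivity
    _ = _ := hmain
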